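/- arXiv:2301.06126 — 6 statements merged into one kernel-verified Lean document; each statement's English description precedes it below -/
import Mathlib

section
/- Let X be a finite measure space and A a closed invertible linear operator on L²(X) whose inverse is dominated by a bounded positive operator C with C1 ∈ L^∞(X). If λ is an eigenvalue of A possessing an eigenvector in L^∞(X), then 1 ≤ |λ| · ‖C1‖_∞. -/
open MeasureTheory
open scoped ENNReal

/-- Donsker–Varadhan type eigenvalue lower bound via a dominated
inverse: `1 ≤ |λ| ‖C 1‖_∞`. -/
theorem eigenvalue_lower_bound_dominated_inverse
    {X : Type*} [MeasurableSpace X] (ν : Measure X) [IsFiniteMeasure ν]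
    -- `Ainv` is the (bounded) inverse of the closed invertible operator `A`
    (Ainv : Lp ℝ 2 ν →L[ℝ] Lp ℝ 2 ν)
    (C : Lp ℝ 2 ν →L[ℝ] Lp ℝ 2 ν)
    (hCpos : ∀ f : Lp ℝ 2 ν, (0 : X → ℝ) ≤ᵐ[ν] f → (0 : X → ℝ) ≤ᵐ[ν] C f)
    (hdom : ∀ f : Lp ℝ 2 ν, ∀ᵐ x ∂ν, |Ainv f x| ≤ C |f| x)
    (one : Lp ℝ 2 ν) (hone : (one : X → ℝ) =ᵐ[ν] fun _ => (1 : ℝ))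
    (hC1_inf : eLpNorm (C one : X → ℝ) ⊤ ν ≠ ∞)
    -- `λ` is an eigenvalue of `A` with eigenvector `φ ∈ L^∞`
    (lam : ℝ) (φ : Lp ℝ 2 ν) (hφ : φ ≠ 0) (heig : Ainv (lam • φ) = φ)
    (hphi_inf : eLpNorm (φ : X → ℝ) ⊤ ν ≠ ∞) :
    1 ≤ |lam| * (eLpNorm (C one : X → ℝ) ⊤ ν).toReal := by
  set M : ℝ := (eLpNorm (φ : X → ℝ) ⊤ ν).toReal with hM
  set K : ℝ := (eLpNorm (C one : X → ℝ) ⊤ ν).toReal with hK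
  -- a.e. bounds from the essential sup
  have hφbd : ∀ᵐ x ∂ν, |φ x| ≤ M := by
    filter_upwards [enorm_ae_le_eLpNormEssSup (φ : X → ℝ) ν] with x hx
    have : (‖φ x‖₊ : ℝ≥0∞) ≤ eLpNorm (φ : X → ℝ) ⊤ ν := by
      simpa [eLpNorm_exponent_top, enorm_eq_nnnorm] using hx
    have := ENNReal.toReal_mono hphi_inf this
    simpa [Real.norm_eq_abs, hM] using this
  have hC1bd : ∀ᵐ x ∂ν, |C one x| ≤ K := by
    filter_upwards [enorm_ae_le_eLpNormEssSup (C one : X → ℝ) ν] with x hx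
    have : (‖C one x‖₊ : ℝ≥0∞) ≤ eLpNorm (C one : X → ℝ) ⊤ ν := by
      simpa [eLpNorm_exponent_top, enorm_eq_nnnorm] using hx
    have := ENNReal.toReal_mono hC1_inf this
    simpa [Real.norm_eq_abs, hK] using this
  -- |lam • φ| = |lam| • |φ| in Lp
  have habs : |lam • φ| = |lam| • |φ| := by
    apply Lp.ext
    filter_upwards [Lp.coeFn_abs (lam • φ), Lp.coeFn_smul lam φ,
      Lp.coeFn_smul |lam| |φ|, Lp.coeFn_abs φ] with x h1 h2 h3 h4
    rw [h1, h3, h2]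
    simp [h4, abs_mul]
  -- domination applied to the eigenvector
  have hdomφ : ∀ᵐ x ∂ν, |φ x| ≤ |lam| * (C |φ|) x := by
    have h := hdom (lam • φ)
    rw [habs] at h
    filter_upwards [h, Lp.coeFn_smul |lam| (C |φ|)] with x hx hsm
    have : (C (|lam| • |φ|)) x = |lam| * (C |φ|) x := by
      rw [C.map_smul]; simpa using hsm
    calc |φ x| = |Ainv (lam • φ) x| := by rw [heig]
      _ ≤ C (|lam| • |φ|) x := hx
      _ = |lam| * (C |φ|) x := this
  -- C|φ| ≤ M * C one a.e., via positivity applied to M • one - |φ|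
  have hMone : (0 : X → ℝ) ≤ᵐ[ν] (C (M • one - |φ|)) := by
    apply hCpos
    filter_upwards [Lp.coeFn_sub (M • one) |φ|, Lp.coeFn_smul M one, hone,
      Lp.coeFn_abs φ, hφbd] with x h1 h2 h3 h4 h5
    rw [h1]
    simp only [Pi.sub_apply, Pi.zero_apply]
    rw [h2]
    simp only [Pi.smul_apply, smul_eq_mul, h3, h4, mul_one]
    linarith
  have hCφ : ∀ᵐ x ∂ν, (C |φ|) x ≤ M * (C one) x := by
    have : C (M • one - |φ|) = M • C one - C |φ| := by
      rw [map_sub, C.map_smul]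
    rw [this] at hMone
    filter_upwards [hMone, Lp.coeFn_sub (M • C one) (C |φ|),
      Lp.coeFn_smul M (C one)] with x h1 h2 h3
    have := h1
    rw [h2] at this
    simp only [Pi.sub_apply, h3, Pi.smul_apply, smul_eq_mul, Pi.zero_apply] at this
    linarith
  -- combine: |φ| ≤ |lam| * M * K a.e.
  have hfin : ∀ᵐ x ∂ν, ‖φ x‖ ≤ |lam| * M * K := by
    filter_upwards [hdomφ, hCφ, hC1bd] with x h1 h2 h3
    have hMnn : 0 ≤ M := ENNReal.toReal_nonneg
    have h4 : (C one) x ≤ K := le_of_abs_le h3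
    have e1 : 0 ≤ |lam| * (M * (C one) x - (C |φ|) x) :=
      mul_nonneg (abs_nonneg lam) (by linarith)
    have e2 : 0 ≤ (|lam| * M) * (K - (C one) x) :=
      mul_nonneg (mul_nonneg (abs_nonneg lam) hMnn) (by linarith)
    rw [Real.norm_eq_abs]
    nlinarith [h1, e1, e2]
  -- hence M ≤ |lam| * M * K
  have hMle : M ≤ |lam| * M * K := by
    have hnn : 0 ≤ |lam| * M * K :=
      mul_nonneg (mul_nonneg (abs_nonneg lam) ENNReal.toReal_nonneg)
        ENNReal.toReal_nonneg
    have h := eLpNorm_le_of_ae_bound (μ := ν) (p := ⊤) hfin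
    simp only [ENNReal.toReal_top, inv_zero, ENNReal.rpow_zero, one_mul] at h
    have h2 := ENNReal.toReal_mono ENNReal.ofReal_ne_top h
    rw [ENNReal.toReal_ofReal hnn] at h2
    exact h2
  have hMpos : 0 < M := by
    refine ENNReal.toReal_pos (fun h0 => hφ ?_) hphi_inf
    apply Lp.ext
    have h00 : (φ : X → ℝ) =ᵐ[ν] 0 := by
      rw [eLpNorm_exponent_top] at h0
      exact eLpNormEssSup_eq_zero_iff.mp h0
    exact h00.trans (Lp.coeFn_zero ℝ 2 ν).symm
  nlinarith [hMle, hMpos]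
end

section
/- Let X be a finite measure space, A a linear operator generating a C₀-semigroup (e^{-tA})_{t≥0} of positive operators on L²(X), with e^{-tA}1 ∈ L^∞(X) for all t > 0. Then every eigenvalue λ of A with an eigenvector in L^∞(X) satisfies Re λ ≥ -inf_{t>0} (log ‖e^{-tA}1‖_∞)/t. -/
/-!
If `e^{-tA} φ = e^{-tλ} φ` with `φ ∈ L^∞`, then `|φ| ≤ ‖φ‖_∞ · 1`, and a positive operator
preserves this domination: `e^{-t Re λ} |φ| = |e^{-tA} φ| ≤ ‖φ‖_∞ e^{-tA} 1`. Taking sup norms and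
cancelling `‖φ‖_∞ ≠ 0` gives `e^{-t Re λ} ≤ ‖e^{-tA} 1‖_∞` for every `t > 0`; take logarithms.
-/

open MeasureTheory
open scoped ENNReal

namespace MeasureTheory

variable {X : Type*} [MeasurableSpace X] {ν : Measure X}

theorem ae_norm_le_toReal_eLpNorm_top {E : Type*} [NormedAddCommGroup E] {f : X → E}
    (hf : eLpNorm f ∞ ν ≠ ∞) : ∀ᵐ x ∂ν, ‖f x‖ ≤ (eLpNorm f ∞ ν).toReal := by
  filter_upwards [ae_le_eLpNormEssSup (f := f) (μ := ν)] with x hx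
  rw [← eLpNorm_exponent_top] at hx
  simpa using ENNReal.toReal_mono hf hx

section PositiveOperator

variable {p : ℝ≥0∞} {F : Type*} [FunLike F (Lp ℝ p ν) (Lp ℝ p ν)]

theorem ae_abs_apply_le_of_ae_abs_le [AddMonoidHomClass F (Lp ℝ p ν) (Lp ℝ p ν)] (S : F)
    (hS : ∀ f : Lp ℝ p ν, 0 ≤ᵐ[ν] f → 0 ≤ᵐ[ν] S f) {f g : Lp ℝ p ν}
    (hfg : ∀ᵐ x ∂ν, |f x| ≤ g x) : ∀ᵐ x ∂ν, |S f x| ≤ S g x := by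
  have hsub : 0 ≤ᵐ[ν] S (g - f) := hS _ <| by
    filter_upwards [Lp.coeFn_sub g f, hfg] with x hx hx'
    rw [Pi.zero_apply, hx, Pi.sub_apply]
    linarith [(abs_le.1 hx').2]
  have hadd : 0 ≤ᵐ[ν] S (g + f) := hS _ <| by
    filter_upwards [Lp.coeFn_add g f, hfg] with x hx hx'
    rw [Pi.zero_apply, hx, Pi.add_apply]
    linarith [(abs_le.1 hx').1]
  rw [map_sub] at hsub
  rw [map_add] at hadd
  filter_upwards [hsub, hadd, Lp.coeFn_sub (S g) (S f), Lp.coeFn_add (S g) (S f)]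
    with x hsub hadd hsub' hadd'
  simp only [Pi.zero_apply, hsub', hadd', Pi.sub_apply, Pi.add_apply] at hsub hadd
  exact abs_le.2 ⟨by linarith, by linarith⟩

theorem enorm_le_eLpNorm_top_apply_one_of_apply_eq_smul
    [LinearMapClass F ℝ (Lp ℝ p ν) (Lp ℝ p ν)] (S : F) (hS : ∀ f : Lp ℝ p ν, 0 ≤ᵐ[ν] f → 0 ≤ᵐ[ν] S f)
    (one : Lp ℝ p ν) (hone : (one : X → ℝ) =ᵐ[ν] fun _ => (1 : ℝ))
    {φ : Lp ℝ p ν} (hφ : φ ≠ 0) (hφ_top : eLpNorm (φ : X → ℝ) ∞ ν ≠ ∞)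
    {r : ℝ} (hr : S φ = r • φ) : ‖r‖ₑ ≤ eLpNorm (S one : X → ℝ) ∞ ν := by
  set C := eLpNorm (φ : X → ℝ) ∞ ν
  have hC : C ≠ 0 := fun h => hφ <| (Lp.eq_zero_iff_ae_eq_zero).2 <|
    (eLpNorm_eq_zero_iff (Lp.aestronglyMeasurable φ) ENNReal.top_ne_zero).1 h
  have hφ_le : ∀ᵐ x ∂ν, |φ x| ≤ (C.toReal • one : Lp ℝ p ν) x := by
    filter_upwards [ae_norm_le_toReal_eLpNorm_top hφ_top, Lp.coeFn_smul C.toReal one, hone]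
      with x hx hsmul hx1
    rwa [hsmul, Pi.smul_apply, hx1, smul_eq_mul, mul_one, ← Real.norm_eq_abs]
  have hdom : ∀ᵐ x ∂ν, ‖(r • (φ : X → ℝ)) x‖ ≤ (C.toReal • (S one : X → ℝ)) x := by
    filter_upwards [ae_abs_apply_le_of_ae_abs_le S hS hφ_le, Lp.coeFn_smul r φ,
      Lp.coeFn_smul C.toReal (S one)] with x hx hr' hc
    rwa [map_smul, hc, hr, hr', ← Real.norm_eq_abs] at hx
  have h := eLpNorm_mono_ae_real (p := ∞) hdom
  rw [eLpNorm_const_smul, eLpNorm_const_smul, Real.enorm_of_nonneg ENNReal.toReal_nonneg,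
    ENNReal.ofReal_toReal hφ_top, mul_comm C] at h
  exact (ENNReal.mul_le_mul_iff_left hC hφ_top).1 h

end PositiveOperator

end MeasureTheory

theorem eigenvalue_lower_bound_parabolic_general
    {X : Type*} [MeasurableSpace X] (ν : Measure X)
    -- the `C₀`-semigroup `T t = e^{-tA}` generated by `-A`
    (T : ℝ → (Lp ℝ 2 ν →L[ℝ] Lp ℝ 2 ν))
    -- positivity of the semigroup
    (hTpos : ∀ t : ℝ, 0 ≤ t → ∀ f : Lp ℝ 2 ν,
      (0 : X → ℝ) ≤ᵐ[ν] f → (0 : X → ℝ) ≤ᵐ[ν] T t f)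
    (one : Lp ℝ 2 ν) (hone : (one : X → ℝ) =ᵐ[ν] fun _ => (1 : ℝ))
    -- `e^{-tA} 1 ∈ L^∞` for all `t > 0`
    (hT1_inf : ∀ t : ℝ, 0 < t → eLpNorm (T t one : X → ℝ) ⊤ ν ≠ ∞)
    -- eigenpair `(λ, φ)` of `A` with `φ ∈ L^∞`, via `e^{-tA} φ = e^{-tλ} φ`
    (lam : ℝ) (φ : Lp ℝ 2 ν) (hφ : φ ≠ 0)
    (heig : ∀ t : ℝ, 0 ≤ t → T t φ = Real.exp (-(t * lam)) • φ)
    (hphi_inf : eLpNorm (φ : X → ℝ) ⊤ ν ≠ ∞) :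
    -(⨅ t : {t : ℝ // 0 < t},
        Real.log ((eLpNorm (T t one : X → ℝ) ⊤ ν).toReal) / (t : ℝ)) ≤ lam := by
  have hexp_le (t : ℝ) (ht : 0 < t) :
      Real.exp (-(t * lam)) ≤ (eLpNorm (T t one : X → ℝ) ⊤ ν).toReal := by
    have h := enorm_le_eLpNorm_top_apply_one_of_apply_eq_smul (T t) (hTpos t ht.le) one hone
      hφ hphi_inf (heig t ht.le)
    rw [Real.enorm_of_nonneg (Real.exp_pos _).le] at h
    exact (ENNReal.ofReal_le_iff_le_toReal (hT1_inf t ht)).1 h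
  rw [neg_le]
  refine le_ciInf fun ⟨t, ht⟩ => ?_
  have hlog := (Real.le_log_iff_exp_le ((Real.exp_pos _).trans_le (hexp_le t ht))).2 (hexp_le t ht)
  rw [le_div_iff₀ ht]
  linarith

/-- eigenvalue lower bound via the parabolic landscape functions
`e^{-tA} 1`:  `Re λ ≥ -inf_{t>0} log ‖e^{-tA} 1‖_∞ / t`. -/
theorem eigenvalue_lower_bound_parabolic
    {X : Type*} [MeasurableSpace X] (ν : Measure X) [IsFiniteMeasure ν]
    -- the `C₀`-semigroup `T t = e^{-tA}` generated by `-A`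
    (T : ℝ → (Lp ℝ 2 ν →L[ℝ] Lp ℝ 2 ν))
    (hT0 : T 0 = ContinuousLinearMap.id ℝ (Lp ℝ 2 ν))
    (hTsem : ∀ s t : ℝ, 0 ≤ s → 0 ≤ t → T (s + t) = (T s).comp (T t))
    (hTcont : ∀ f : Lp ℝ 2 ν, ContinuousOn (fun t => T t f) (Set.Ici 0))
    -- positivity of the semigroup
    (hTpos : ∀ t : ℝ, 0 ≤ t → ∀ f : Lp ℝ 2 ν,
      (0 : X → ℝ) ≤ᵐ[ν] f → (0 : X → ℝ) ≤ᵐ[ν] T t f)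
    (one : Lp ℝ 2 ν) (hone : (one : X → ℝ) =ᵐ[ν] fun _ => (1 : ℝ))
    -- `e^{-tA} 1 ∈ L^∞` for all `t > 0`
    (hT1_inf : ∀ t : ℝ, 0 < t → eLpNorm (T t one : X → ℝ) ⊤ ν ≠ ∞)
    -- eigenpair `(λ, φ)` of `A` with `φ ∈ L^∞`, via `e^{-tA} φ = e^{-tλ} φ`
    (lam : ℝ) (φ : Lp ℝ 2 ν) (hφ : φ ≠ 0)
    (heig : ∀ t : ℝ, 0 ≤ t → T t φ = Real.exp (-(t * lam)) • φ)
    (hphi_inf : eLpNorm (φ : X → ℝ) ⊤ ν ≠ ∞) :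
    -(⨅ t : {t : ℝ // 0 < t},
        Real.log ((eLpNorm (T t one : X → ℝ) ⊤ ν).toReal) / (t : ℝ)) ≤ lam :=
  eigenvalue_lower_bound_parabolic_general ν T hTpos one hone hT1_inf lam φ hφ heig hphi_inf
end

section
/- For p ∈ (1,∞), the landscape lower bound for the first Dirichlet eigenvalue of the 1D p-Laplacian on (0,1) reads λ_{min,p} ≥ ‖v_p‖_∞^{1-p} = 2^p (p/(p-1))^{p-1}, where v_p is the p-torsion function; and the limit as p → 1⁺ of 2^p (p/(p-1))^{p-1} equals 2, the Cheeger constant of (0,1). -/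
open Real Filter

/-- the landscape eigenvalue bound for the 1D Dirichlet
`p`-Laplacian: `‖v_p‖_∞^{1-p} = 2^p (p/(p-1))^{p-1}`, and this quantity tends
to `2`, the Cheeger constant of `(0,1)`, as `p → 1⁺`. -/
theorem pLaplacian_landscape_bound_and_cheeger_limit :
    (∀ p : ℝ, 1 < p →
      ((p - 1) / p * (1 / 2 : ℝ) ^ (p / (p - 1))) ^ (1 - p) =
        (2 : ℝ) ^ p * (p / (p - 1)) ^ (p - 1)) ∧
    Filter.Tendsto (fun p : ℝ => (2 : ℝ) ^ p * (p / (p - 1)) ^ (p - 1))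
      (nhdsWithin 1 (Set.Ioi 1)) (nhds 2) := by
  constructor
  · intro p hp
    have hp0 : (0:ℝ) < p := lt_trans one_pos hp
    have hp1 : (0:ℝ) < p - 1 := by linarith
    have ha : (0:ℝ) < (p - 1) / p := div_pos hp1 hp0
    have hb : (0:ℝ) ≤ (1 / 2 : ℝ) ^ (p / (p - 1)) := Real.rpow_nonneg (by norm_num) _
    rw [Real.mul_rpow ha.le hb]
    rw [← Real.rpow_mul (by norm_num : (0:ℝ) ≤ (1/2:ℝ))]
    have he : p / (p - 1) * (1 - p) = -p := by
      field_simp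
      ring
    rw [he]
    have h2 : ((1:ℝ)/2) ^ (-p) = (2:ℝ) ^ p := by
      rw [Real.rpow_neg (by norm_num), one_div, Real.inv_rpow (by norm_num), inv_inv]
    have h3 : ((p-1)/p) ^ (1 - p) = (p/(p-1)) ^ (p-1) := by
      rw [show (1 - p) = -(p-1) by ring, Real.rpow_neg ha.le,
        ← Real.inv_rpow ha.le, inv_div]
    rw [h2, h3]
    simp [mul_comm]
  · have h2 : Tendsto (fun p : ℝ => (2:ℝ) ^ p) (nhdsWithin 1 (Set.Ioi 1)) (nhds 2) := by
      have := ((continuous_const.rpow continuous_id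
        (fun _ => Or.inl two_ne_zero)).tendsto (1:ℝ)).mono_left
        (nhdsWithin_le_nhds (s := Set.Ioi (1:ℝ)))
      simpa using this
    have hg : Tendsto (fun p : ℝ => (p/(p-1)) ^ (p-1)) (nhdsWithin 1 (Set.Ioi 1)) (nhds 1) := by
      have heq : ∀ p ∈ Set.Ioi (1:ℝ),
          Real.exp ((p-1) * Real.log p - Real.log (p-1) * (p-1)) = (p/(p-1)) ^ (p-1) := by
        intro p hp
        have hp0 : (0:ℝ) < p := lt_trans one_pos hp
        have hp1 : (0:ℝ) < p - 1 := by simpa [sub_pos] using hp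
        rw [Real.rpow_def_of_pos (div_pos hp0 hp1), Real.log_div hp0.ne' hp1.ne']
        ring_nf
      refine Tendsto.congr' (eventuallyEq_of_mem self_mem_nhdsWithin heq) ?_
      have hlim : Tendsto (fun p : ℝ => (p-1) * Real.log p - Real.log (p-1) * (p-1))
          (nhdsWithin 1 (Set.Ioi 1)) (nhds 0) := by
        have t1 : Tendsto (fun p : ℝ => (p-1) * Real.log p)
            (nhdsWithin 1 (Set.Ioi 1)) (nhds 0) := by
          have : Tendsto (fun p : ℝ => (p-1) * Real.log p) (nhds 1) (nhds 0) := by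
            have := ((continuous_sub_right (1:ℝ)).tendsto 1).mul
              ((Real.continuousAt_log one_ne_zero).tendsto)
            simpa using this
          exact this.mono_left nhdsWithin_le_nhds
        have tsub : Tendsto (fun p : ℝ => p - 1) (nhdsWithin 1 (Set.Ioi 1))
            (nhdsWithin 0 (Set.Ioi 0)) := by
          apply tendsto_nhdsWithin_of_tendsto_nhds_of_eventually_within
          · simpa using (((continuous_sub_right (1:ℝ)).tendsto 1).mono_left
              (nhdsWithin_le_nhds (s := Set.Ioi (1:ℝ))))
          · exact eventually_mem_nhdsWithin.mono (fun p hp => by simpa [sub_pos] using hp)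
        have t2 : Tendsto (fun p : ℝ => Real.log (p-1) * (p-1))
            (nhdsWithin 1 (Set.Ioi 1)) (nhds 0) := by
          have := (tendsto_log_mul_rpow_nhdsGT_zero one_pos).comp tsub
          simpa [Real.rpow_one, Function.comp_def] using this
        simpa using t1.sub t2
      simpa [Function.comp_def] using (Real.continuous_exp.tendsto 0).comp hlim
    simpa using h2.mul hg
end

section
/- The known first eigenvalue λ_{min,p} = (p-1)π_p^p of the 1D Dirichlet p-Laplacian on (0,1), where π_p = 2π/(p sin(π/p)), satisfies λ_{min,p} ≥ 2^p (p/(p-1))^{p-1} for all p ∈ (1,∞). -/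
open Real
set_option maxHeartbeats 1000000


private lemma nonneg_of_deriv_nonneg {f f' : ℝ → ℝ} (hd : ∀ y, HasDerivAt f (f' y) y)
    (h0 : f 0 = 0) (h' : ∀ y, 0 ≤ y → 0 ≤ f' y) {x : ℝ} (hx : 0 ≤ x) : 0 ≤ f x := by
  have hmono : MonotoneOn f (Set.Ici (0:ℝ)) := by
    refine monotoneOn_of_deriv_nonneg (convex_Ici 0)
      (fun y _ => (hd y).continuousAt.continuousWithinAt)
      (fun y _ => (hd y).differentiableAt.differentiableWithinAt)
      (fun y hy => ?_)
    rw [(hd y).deriv]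
    rw [interior_Ici] at hy
    exact h' y (le_of_lt hy)
  have := hmono Set.self_mem_Ici (Set.mem_Ici.2 hx) hx
  simpa [h0] using this

private lemma taylor_sin_ge {x : ℝ} (hx : 0 ≤ x) : x - x^3/6 ≤ Real.sin x := by
  have h := nonneg_of_deriv_nonneg (f := fun z => Real.sin z - (z - z^3/6))
    (f' := fun z => Real.cos z - (1 - z^2/2)) (fun y => ?_) (by norm_num) (fun y _ => ?_) hx
  · linarith [h]
  · have h1 : HasDerivAt (fun z : ℝ => z - z^3/6) (1 - y^2/2) y := by
      have := ((hasDerivAt_pow 3 y).div_const 6)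
      have := (hasDerivAt_id y).sub this
      exact this.congr_deriv (by norm_num; ring)
    exact (Real.hasDerivAt_sin y).sub h1
  · linarith [Real.one_sub_sq_div_two_le_cos (x := y)]

private lemma taylor_cos_le (x : ℝ) : Real.cos x ≤ 1 - x^2/2 + x^4/24 := by
  wlog hx : 0 ≤ x generalizing x
  · have h := this (-x) (by linarith)
    rw [Real.cos_neg] at h
    have e2 : (-x)^2 = x^2 := by ring
    have e4 : (-x)^4 = x^4 := by ring
    rw [e2, e4] at h
    exact h
  have h := nonneg_of_deriv_nonneg (f := fun z => (1 - z^2/2 + z^4/24) - Real.cos z)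
    (f' := fun z => (Real.sin z - (z - z^3/6))) (fun y => ?_) (by norm_num) (fun y hy => ?_) hx
  · linarith [h]
  · have h1 : HasDerivAt (fun z : ℝ => 1 - z^2/2 + z^4/24) (-(y) + y^3/6) y := by
      have h2 := (hasDerivAt_pow 2 y).div_const 2
      have h4 := (hasDerivAt_pow 4 y).div_const 24
      have := ((hasDerivAt_const y (1:ℝ)).sub h2).add h4
      exact this.congr_deriv (by norm_num; ring)
    have := h1.sub (Real.hasDerivAt_cos y)
    exact this.congr_deriv (by ring)
  · linarith [taylor_sin_ge hy]

private lemma taylor_sin_le {x : ℝ} (hx : 0 ≤ x) : Real.sin x ≤ x - x^3/6 + x^5/120 := by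
  have h := nonneg_of_deriv_nonneg (f := fun z => (z - z^3/6 + z^5/120) - Real.sin z)
    (f' := fun z => (1 - z^2/2 + z^4/24) - Real.cos z) (fun y => ?_) (by norm_num)
    (fun y hy => ?_) hx
  · linarith [h]
  · have h3 := (hasDerivAt_pow 3 y).div_const 6
    have h5 := (hasDerivAt_pow 5 y).div_const 120
    have hsin := Real.hasDerivAt_sin y
    have := (((hasDerivAt_id y).sub h3).add h5).sub hsin
    exact this.congr_deriv (by norm_num; ring)
  · linarith [taylor_cos_le y]


private lemma neg_log_one_sub_le {u : ℝ} (h0 : 0 ≤ u) (h1 : u ≤ 1/3) :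
    -Real.log (1-u) ≤ u + u^2 := by
  have h1u : (0:ℝ) < 1 - u := by linarith
  set a : ℝ := (u + u^2)/4 with ha_def
  have ha : (0:ℝ) ≤ a := by positivity
  have hexp : (1 + a)^4 ≤ Real.exp (u+u^2) := by
    calc (1 + a)^4 ≤ (Real.exp a)^4 := by
          apply pow_le_pow_left₀ (by linarith) (by linarith [Real.add_one_le_exp a])
      _ = Real.exp (u+u^2) := by
          rw [← Real.exp_nat_mul]; rw [ha_def]; ring_nf
  have hlow : 1 + 4*a + 6*a^2 ≤ (1+a)^4 := by
    nlinarith [pow_nonneg ha 3, pow_nonneg ha 4, sq_nonneg a]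
  have hkey : (1-u)⁻¹ ≤ (1 + a)^4 := by
    rw [inv_le_iff_one_le_mul₀ h1u]
    have : (1:ℝ) ≤ (1 + 4*a + 6*a^2) * (1-u) := by
      rw [ha_def]
      nlinarith [sq_nonneg u, pow_nonneg h0 3, pow_nonneg h0 4, pow_nonneg h0 5]
    nlinarith [hlow]
  have : Real.log ((1-u)⁻¹) ≤ u + u^2 := by
    rw [Real.log_le_iff_le_exp (by positivity)]
    exact le_trans hkey hexp
  rwa [Real.log_inv] at this

private lemma coreA {p : ℝ} (hp : 1 < p) (hp2 : p ≤ 3/2) :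
    (p-1) * Real.log p + p * Real.log (Real.sin (π/p)) ≤ p * Real.log (π*(p-1)/p) := by
  have hp0 : (0:ℝ) < p := by linarith
  have hp1 : (0:ℝ) < p - 1 := by linarith
  set u : ℝ := (p-1)/p with hu_def
  set t : ℝ := π*(p-1)/p with ht_def
  have hu0 : 0 < u := by positivity
  have hu3 : u ≤ 1/3 := by rw [hu_def, div_le_iff₀ hp0]; linarith
  have ht0 : 0 < t := by have := pi_pos; positivity
  have htu : t = π * u := by rw [ht_def, hu_def]; ring
  have hpi1 : (3.1415:ℝ) < π := by linarith [pi_gt_d6]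
  have hpi2 : π < 3.1416 := by linarith [pi_lt_d6]
  have ht1 : t ≤ 1.048 := by
    rw [htu]
    nlinarith
  -- sin (π/p) = sin t
  have hsin_eq : Real.sin (π/p) = Real.sin t := by
    have : π - t = π/p := by rw [ht_def]; field_simp; ring
    rw [← this, Real.sin_pi_sub]
  have hsin0 : 0 < Real.sin (π/p) := by
    apply Real.sin_pos_of_pos_of_lt_pi
    · positivity
    · rw [div_lt_iff₀ hp0]; nlinarith [pi_pos]
  set c : ℝ := 1 - t^2/6 + t^4/120 with hc_def
  have hc0 : 0 < c := by rw [hc_def]; nlinarith [sq_nonneg (t^2)]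
  have hsle : Real.sin t ≤ t * c := by
    calc Real.sin t ≤ t - t^3/6 + t^5/120 := taylor_sin_le ht0.le
      _ = t * c := by rw [hc_def]; ring
  -- log bound on sin
  have hlogsin : Real.log (Real.sin (π/p)) ≤ Real.log t + (c - 1) := by
    calc Real.log (Real.sin (π/p)) ≤ Real.log (t*c) := by
          apply Real.log_le_log hsin0
          rw [hsin_eq]; exact hsle
      _ = Real.log t + Real.log c := Real.log_mul (ne_of_gt ht0) (ne_of_gt hc0)
      _ ≤ Real.log t + (c - 1) := by linarith [Real.log_le_sub_one_of_pos hc0]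
  -- log p ≤ u + u^2
  have hlogp : Real.log p ≤ u + u^2 := by
    have h1u : (1:ℝ) - u = 1/p := by rw [hu_def]; field_simp; ring
    have := neg_log_one_sub_le hu0.le hu3
    rw [h1u, one_div, Real.log_inv] at this
    linarith
  -- key polynomial inequality
  have hπ2 : (9.869:ℝ) ≤ π^2 := by nlinarith
  have hπ2' : π^2 ≤ (9.8697:ℝ) := by nlinarith
  have hπ4 : π^4 ≤ (97.42:ℝ) := by nlinarith [hπ2', sq_nonneg π, Real.pi_pos]
  have hu2 : u^2 ≤ 1/9 := by nlinarith
  have hprod : π^4 * u^2 ≤ 97.42 * (1/9) :=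
    mul_le_mul hπ4 hu2 (sq_nonneg u) (by norm_num)
  have hkey : 1 + u ≤ π^2/6 - π^4*u^2/120 := by nlinarith
  have hmain : (p-1) * Real.log p ≤ p * (1 - c) := by
    have hpu : p - 1 = u * p := by rw [hu_def]; field_simp
    have h2 : (p-1) * Real.log p ≤ (p-1) * (u + u^2) :=
      mul_le_mul_of_nonneg_left hlogp hp1.le
    have h3 : (p-1) * (u + u^2) = p * (u^2 * (1+u)) := by rw [hpu]; ring
    have h4 : u^2 * (1+u) ≤ u^2 * (π^2/6 - π^4*u^2/120) :=
      mul_le_mul_of_nonneg_left hkey (by positivity)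
    have h5 : 1 - c = u^2 * (π^2/6 - π^4*u^2/120) - (u^2*(π^2/6 - π^4*u^2/120) - (1-c)) := by ring
    have h6 : 1 - c = t^2/6 - t^4/120 := by rw [hc_def]; ring
    have h7 : t^2/6 - t^4/120 = u^2 * (π^2/6 - π^4*u^2/120) := by rw [htu]; ring
    calc (p-1) * Real.log p ≤ p * (u^2 * (1+u)) := by rw [← h3]; exact h2
      _ ≤ p * (u^2 * (π^2/6 - π^4*u^2/120)) := mul_le_mul_of_nonneg_left h4 hp0.le
      _ = p * (1 - c) := by rw [h6, h7]
  -- conclude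
  have hexp : p * Real.log (Real.sin (π/p)) ≤ p * Real.log t + p * (c-1) := by
    have := mul_le_mul_of_nonneg_left hlogsin hp0.le
    linarith [this]
  have : p * Real.log (π*(p-1)/p) = p * Real.log t := by rw [ht_def]
  rw [this]
  calc (p-1) * Real.log p + p * Real.log (Real.sin (π/p))
      ≤ p*(1-c) + (p * Real.log t + p*(c-1)) := add_le_add hmain hexp
    _ = p * Real.log t := by ring

-- parabola bound: for p in [3/2, 9], sin(π/p) ≤ 4(p-1)/p²
private lemma pLap_parabola {p : ℝ} (h1 : 3/2 ≤ p) (h2 : p ≤ 9) :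
    Real.sin (π/p) ≤ 4*(p-1)/p^2 := by
  have hp0 : (0:ℝ) < p := by linarith
  have hpi1 : (3.1415:ℝ) < π := by linarith [pi_gt_d6]
  have hpi2 : π < 3.1416 := by linarith [pi_lt_d6]
  rcases le_or_gt (14/3 : ℝ) p with hc | hc
  · -- easy: sin x ≤ x ≤ 4(p-1)/p²
    have h1 : Real.sin (π/p) ≤ π/p := Real.sin_le (by positivity)
    have h2 : π/p ≤ 4*(p-1)/p^2 := by
      rw [div_le_div_iff₀ (by positivity) (by positivity)]
      nlinarith
    linarith
  · -- cos route
    set y : ℝ := π/p - π/2 with hy_def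
    have hsin_eq : Real.sin (π/p) = Real.cos y := by
      rw [hy_def, show π/p - π/2 = -(π/2 - π/p) by ring, Real.cos_neg,
        Real.cos_pi_div_two_sub]
    have hyu : y ≤ 0.53 := by
      have : π/p ≤ π/(3/2) := by
        apply div_le_div_of_nonneg_left (le_of_lt Real.pi_pos) (by norm_num) h1
      rw [hy_def]; nlinarith
    have hyl : -0.9 ≤ y := by
      have : π/(14/3) ≤ π/p := by
        apply div_le_div_of_nonneg_left (le_of_lt Real.pi_pos) (by positivity) hc.le
      rw [hy_def]; nlinarith
    have hy2 : y^2 ≤ 0.81 := by nlinarith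
    have hcos : Real.cos y ≤ 1 - y^2/2 + y^4/24 := taylor_cos_le y
    have hπ2 : (9.869:ℝ) ≤ π^2 := by nlinarith
    have hA : (0:ℝ) ≤ 1/2 - y^2/24 - 0.46625 := by nlinarith
    have hB : (0:ℝ) ≤ π^2 - 9.869 := by linarith
    have hquad' : (4:ℝ) ≤ (1/2 - y^2/24) * π^2 := by nlinarith [mul_nonneg hA hB]
    have hquad : 1 - y^2/2 + y^4/24 ≤ 1 - 4*y^2/π^2 := by
      rw [sub_add, sub_le_sub_iff_left, div_le_iff₀ (by positivity)]
      nlinarith [mul_le_mul_of_nonneg_left hquad' (sq_nonneg y)]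
    have hident : 1 - 4*y^2/π^2 = 4*(p-1)/p^2 := by
      rw [hy_def]
      field_simp
      ring
    rw [hsin_eq, ← hident]
    linarith [hcos, hquad]

-- concavity bound: for p in [3/2,9], 0 ≤ log p + p (log π - log 4)
private lemma pLap_logbound {p : ℝ} (h1 : 3/2 ≤ p) (h2 : p ≤ 9) :
    0 ≤ Real.log p + p * (Real.log π - Real.log 4) := by
  have hpi1 : (3.1415:ℝ) < π := by linarith [pi_gt_d6]
  set c : ℝ := Real.log π - Real.log 4 with hc_def
  have hE1 : 0 ≤ Real.log (3/2) + (3/2) * c := by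
    have hπ3 : (3.1415:ℝ)^3 ≤ π^3 := pow_le_pow_left₀ (by norm_num) hpi1.le 3
    have hge : (1:ℝ) ≤ (3/2)^2 * (π/4)^3 := by nlinarith [hπ3]
    have h0 := Real.log_nonneg hge
    rw [Real.log_mul (by norm_num) (by positivity), Real.log_pow, Real.log_pow,
      Real.log_div (by norm_num : (3:ℝ) ≠ 0) (by norm_num),
      Real.log_div Real.pi_ne_zero (by norm_num)] at h0
    push_cast at h0
    rw [hc_def, Real.log_div (by norm_num : (3:ℝ) ≠ 0) (by norm_num)]
    linarith
  have hE9 : 0 ≤ Real.log 9 + 9 * c := by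
    have hp9 : (3.141592:ℝ)^9 ≤ π^9 :=
      pow_le_pow_left₀ (by norm_num) (by linarith [pi_gt_d6]) 9
    have hge : (1:ℝ) ≤ 9 * (π/4)^9 := by
      rw [div_pow]
      nlinarith [hp9]
    have h0 := Real.log_nonneg hge
    rw [Real.log_mul (by norm_num) (by positivity), Real.log_pow,
      Real.log_div Real.pi_ne_zero (by norm_num)] at h0
    push_cast at h0
    rw [hc_def]
    linarith
  -- concavity
  set θ : ℝ := 2*(9-p)/15 with hθ_def
  have hθ0 : 0 ≤ θ := by rw [hθ_def]; linarith
  have hθ1 : 0 ≤ 1 - θ := by rw [hθ_def]; linarith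
  have hsum : θ + (1-θ) = 1 := by ring
  have hconc := strictConcaveOn_log_Ioi.concaveOn.2 (Set.mem_Ioi.2 (by norm_num : (0:ℝ) < 3/2))
    (Set.mem_Ioi.2 (by norm_num : (0:ℝ) < 9)) hθ0 hθ1 hsum
  simp only [smul_eq_mul] at hconc
  have hpeq : θ * (3/2) + (1-θ) * 9 = p := by rw [hθ_def]; ring
  rw [hpeq] at hconc
  have hpc : p * c = θ * ((3/2)*c) + (1-θ) * (9*c) := by rw [← hpeq]; ring
  have t1 : 0 ≤ θ * (Real.log (3/2) + (3/2)*c) := mul_nonneg hθ0 hE1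
  have t2 : 0 ≤ (1-θ) * (Real.log 9 + 9*c) := mul_nonneg hθ1 hE9
  nlinarith [hconc, hpc, t1, t2]

private lemma coreB {p : ℝ} (h1 : 3/2 ≤ p) (h2 : p ≤ 9) :
    (p-1) * Real.log p + p * Real.log (Real.sin (π/p)) ≤ p * Real.log (π*(p-1)/p) := by
  have hp0 : (0:ℝ) < p := by linarith
  have hp1 : (0:ℝ) < p - 1 := by linarith
  have hsin0 : 0 < Real.sin (π/p) := by
    apply Real.sin_pos_of_pos_of_lt_pi (by positivity)
    rw [div_lt_iff₀ hp0]; nlinarith [Real.pi_pos]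
  have hb0 : (0:ℝ) < 4*(p-1)/p^2 := by positivity
  have hlogs : Real.log (Real.sin (π/p)) ≤ Real.log 4 + Real.log (p-1) - 2*Real.log p := by
    have h := Real.log_le_log hsin0 (pLap_parabola h1 h2)
    rw [Real.log_div (by positivity) (by positivity), Real.log_mul (by norm_num) (ne_of_gt hp1),
      Real.log_pow] at h
    push_cast at h
    linarith
  have e1 : p * Real.log (π*(p-1)/p) = p*Real.log π + p*Real.log (p-1) - p*Real.log p := by
    rw [Real.log_div (by positivity) (ne_of_gt hp0),
      Real.log_mul Real.pi_ne_zero (ne_of_gt hp1)]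
    ring
  have e2 : p * Real.log (Real.sin (π/p)) ≤
      p*Real.log 4 + p*Real.log (p-1) - 2*(p*Real.log p) := by
    have := mul_le_mul_of_nonneg_left hlogs hp0.le
    nlinarith [this]
  have e3 : (p-1) * Real.log p = p * Real.log p - Real.log p := by ring
  have e4 : 0 ≤ Real.log p + (p*Real.log π - p*Real.log 4) := by
    have := pLap_logbound h1 h2
    nlinarith [this]
  rw [e1, e3]
  linarith [e2, e4]

private lemma coreC {p : ℝ} (h9 : 9 ≤ p) :
    (p-1) * Real.log p + p * Real.log (Real.sin (π/p)) ≤ p * Real.log (π*(p-1)/p) := by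
  have hp0 : (0:ℝ) < p := by linarith
  have hp1 : (0:ℝ) < p - 1 := by linarith
  have hsin0 : 0 < Real.sin (π/p) := by
    apply Real.sin_pos_of_pos_of_lt_pi (by positivity)
    rw [div_lt_iff₀ hp0]; nlinarith [Real.pi_pos]
  have hlogs : Real.log (Real.sin (π/p)) ≤ Real.log π - Real.log p := by
    have h := Real.log_le_log hsin0 (Real.sin_le (by positivity))
    rwa [Real.log_div Real.pi_ne_zero (ne_of_gt hp0)] at h
  have hkey : (p-1) * Real.log p ≤ p * Real.log (p-1) := by
    have hmem1 : p - 1 ∈ {x : ℝ | Real.exp 1 ≤ x} := by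
      simp only [Set.mem_setOf_eq]
      linarith [Real.exp_one_lt_d9]
    have hmem2 : p ∈ {x : ℝ | Real.exp 1 ≤ x} := by
      simp only [Set.mem_setOf_eq]
      linarith [Real.exp_one_lt_d9]
    have h := Real.log_div_self_antitoneOn hmem1 hmem2 (by linarith)
    simp only at h
    rw [div_le_div_iff₀ hp0 hp1] at h
    linarith [h]
  have e1 : p * Real.log (π*(p-1)/p) = p*Real.log π + p*Real.log (p-1) - p*Real.log p := by
    rw [Real.log_div (by positivity) (ne_of_gt hp0),
      Real.log_mul Real.pi_ne_zero (ne_of_gt hp1)]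
    ring
  have e2 : p * Real.log (Real.sin (π/p)) ≤ p*Real.log π - p*Real.log p := by
    have := mul_le_mul_of_nonneg_left hlogs hp0.le
    nlinarith [this]
  rw [e1]
  linarith [e2, hkey]


private lemma pLap_core {p : ℝ} (hp : 1 < p) :
    (p-1) * Real.log p + p * Real.log (Real.sin (π/p)) ≤ p * Real.log (π*(p-1)/p) := by
  rcases le_or_gt p (3/2) with h | h
  · exact coreA hp h
  · rcases le_or_gt p 9 with h9 | h9
    · exact coreB h.le h9
    · exact coreC h9.le

/-- the first eigenvalue `λ_{min,p} = (p-1)π_p^p` of the 1D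
Dirichlet `p`-Laplacian on `(0,1)`, where `π_p = 2π/(p sin(π/p))`, satisfies
the landscape lower bound `λ_{min,p} ≥ 2^p (p/(p-1))^{p-1}`. -/
theorem pLaplacian_first_eigenvalue_ge_landscape_bound (p : ℝ) (hp : 1 < p) :
    (2 : ℝ) ^ p * (p / (p - 1)) ^ (p - 1) ≤
      (p - 1) * (2 * π / (p * Real.sin (π / p))) ^ p := by
  have hp0 : (0:ℝ) < p := by linarith
  have hp1 : (0:ℝ) < p - 1 := by linarith
  have hsin0 : 0 < Real.sin (π/p) := by
    apply Real.sin_pos_of_pos_of_lt_pi (by positivity)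
    rw [div_lt_iff₀ hp0]; nlinarith [Real.pi_pos]
  have hq0 : (0:ℝ) < p / (p-1) := by positivity
  have hb0 : (0:ℝ) < 2 * π / (p * Real.sin (π/p)) := by
    have := Real.pi_pos; positivity
  have hL : (0:ℝ) < (2:ℝ) ^ p * (p / (p - 1)) ^ (p - 1) := by
    have h1 : (0:ℝ) < (2:ℝ) ^ p := Real.rpow_pos_of_pos (by norm_num) p
    have h2 : (0:ℝ) < (p/(p-1)) ^ (p-1) := Real.rpow_pos_of_pos hq0 (p-1)
    positivity
  have hR : (0:ℝ) < (p - 1) * (2 * π / (p * Real.sin (π / p))) ^ p := by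
    have h2 : (0:ℝ) < (2 * π / (p * Real.sin (π/p))) ^ p := Real.rpow_pos_of_pos hb0 p
    positivity
  rw [← Real.log_le_log_iff hL hR]
  have eL : Real.log ((2:ℝ) ^ p * (p / (p - 1)) ^ (p - 1))
      = p * Real.log 2 + (p-1) * Real.log p - (p-1) * Real.log (p-1) := by
    rw [Real.log_mul (ne_of_gt (Real.rpow_pos_of_pos (by norm_num) p)) (ne_of_gt (Real.rpow_pos_of_pos hq0 (p-1))),
      Real.log_rpow (by norm_num), Real.log_rpow hq0,
      Real.log_div (ne_of_gt hp0) (ne_of_gt hp1)]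
    ring
  have eR : Real.log ((p - 1) * (2 * π / (p * Real.sin (π / p))) ^ p)
      = Real.log (p-1) + p * Real.log 2 + p * Real.log π
        - p * Real.log p - p * Real.log (Real.sin (π/p)) := by
    rw [Real.log_mul (ne_of_gt hp1) (ne_of_gt (Real.rpow_pos_of_pos hb0 p)),
      Real.log_rpow hb0,
      Real.log_div (by positivity) (by positivity),
      Real.log_mul (by norm_num) Real.pi_ne_zero,
      Real.log_mul (ne_of_gt hp0) (ne_of_gt hsin0)]
    ring
  rw [eL, eR]
  have hcore := pLap_core hp
  have e1 : p * Real.log (π*(p-1)/p) = p*Real.log π + p*Real.log (p-1) - p*Real.log p := by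
    rw [Real.log_div (by positivity) (ne_of_gt hp0),
      Real.log_mul Real.pi_ne_zero (ne_of_gt hp1)]
    ring
  rw [e1] at hcore
  have e3 : (p-1) * Real.log (p-1) = p * Real.log (p-1) - Real.log (p-1) := by ring
  linarith [hcore, e3]
end

section
/- Let X be a finite set (discrete measure space) and let A be a complex n×n matrix viewed as an operator on ℂⁿ. Define A^♯ by A^♯_{ii} := Re A_{ii} and A^♯_{ij} := -|A_{ij}| for i ≠ j. Then the semigroup (e^{-tA})_{t≥0} is dominated entrywise by (e^{-tA^♯})_{t≥0}, i.e., |(e^{-tA})_{ij}| ≤ (e^{-tA^♯})_{ij} for all t ≥ 0 and all i, j. -/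
open scoped Matrix
open NormedSpace

namespace MSGD

variable {n : ℕ}

noncomputable def mabs (M : Matrix (Fin n) (Fin n) ℂ) : Matrix (Fin n) (Fin n) ℝ :=
  fun i j => ‖M i j‖

lemma pow_abs_le (M : Matrix (Fin n) (Fin n) ℂ) (k : ℕ) (i j : Fin n) :
    ‖(M ^ k) i j‖ ≤ ((mabs M) ^ k) i j := by
  induction k generalizing i j with
  | zero =>
    simp only [pow_zero, Matrix.one_apply]
    split <;> simp
  | succ k ih =>
    rw [pow_succ, pow_succ, Matrix.mul_apply, Matrix.mul_apply]
    refine (norm_sum_le _ _).trans ?_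
    refine Finset.sum_le_sum fun l _ => ?_
    rw [norm_mul]
    exact mul_le_mul (ih i l) le_rfl (norm_nonneg _)
      (le_trans (norm_nonneg _) (ih i l))

lemma pow_nonneg_entry {P : Matrix (Fin n) (Fin n) ℝ} (hP : ∀ i j, 0 ≤ P i j)
    (k : ℕ) (i j : Fin n) : 0 ≤ (P ^ k) i j := by
  induction k generalizing i j with
  | zero => simp only [pow_zero, Matrix.one_apply]; split <;> norm_num
  | succ k ih =>
    rw [pow_succ, Matrix.mul_apply]
    exact Finset.sum_nonneg fun l _ => mul_nonneg (ih i l) (hP l j)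

lemma pow_mono_entry {P Q : Matrix (Fin n) (Fin n) ℝ} (hP : ∀ i j, 0 ≤ P i j)
    (hPQ : ∀ i j, P i j ≤ Q i j) (k : ℕ) (i j : Fin n) :
    (P ^ k) i j ≤ (Q ^ k) i j := by
  induction k generalizing i j with
  | zero => simp
  | succ k ih =>
    rw [pow_succ, pow_succ, Matrix.mul_apply, Matrix.mul_apply]
    refine Finset.sum_le_sum fun l _ => ?_
    exact mul_le_mul (ih i l) (hPQ l j) (hP l j)
      (le_trans (pow_nonneg_entry hP k i l) (ih i l))

lemma summable_entry_R (M : Matrix (Fin n) (Fin n) ℝ) (i j : Fin n) :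
    Summable fun k : ℕ => ((k.factorial : ℝ)⁻¹) • (M ^ k) i j := by
  letI : SeminormedRing (Matrix (Fin n) (Fin n) ℝ) := Matrix.linftyOpSemiNormedRing
  letI : NormedRing (Matrix (Fin n) (Fin n) ℝ) := Matrix.linftyOpNormedRing
  letI : NormedAlgebra ℝ (Matrix (Fin n) (Fin n) ℝ) := Matrix.linftyOpNormedAlgebra
  have h : Summable fun k : ℕ => ((k.factorial : ℝ)⁻¹) • M ^ k :=
    NormedSpace.expSeries_summable' (𝕂 := ℝ) M
  exact (Pi.summable.mp ((Pi.summable.mp h) i)) j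

lemma exp_entry_C (M : Matrix (Fin n) (Fin n) ℂ) (i j : Fin n) :
    exp M i j = ∑' k : ℕ, ((k.factorial : ℂ)⁻¹) • (M ^ k) i j := by
  letI : SeminormedRing (Matrix (Fin n) (Fin n) ℂ) := Matrix.linftyOpSemiNormedRing
  letI : NormedRing (Matrix (Fin n) (Fin n) ℂ) := Matrix.linftyOpNormedRing
  letI : NormedAlgebra ℂ (Matrix (Fin n) (Fin n) ℂ) := Matrix.linftyOpNormedAlgebra
  have h : Summable fun k : ℕ => ((k.factorial : ℂ)⁻¹) • M ^ k :=
    NormedSpace.expSeries_summable' (𝕂 := ℂ) M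
  rw [NormedSpace.exp_eq_tsum ℂ]
  show (∑' k : ℕ, ((k.factorial : ℂ)⁻¹) • M ^ k) i j = _
  exact (congrFun (tsum_apply (x := i) h) j).trans (tsum_apply (Pi.summable.mp h i))

lemma exp_entry_R (M : Matrix (Fin n) (Fin n) ℝ) (i j : Fin n) :
    exp M i j = ∑' k : ℕ, ((k.factorial : ℝ)⁻¹) • (M ^ k) i j := by
  letI : SeminormedRing (Matrix (Fin n) (Fin n) ℝ) := Matrix.linftyOpSemiNormedRing
  letI : NormedRing (Matrix (Fin n) (Fin n) ℝ) := Matrix.linftyOpNormedRing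
  letI : NormedAlgebra ℝ (Matrix (Fin n) (Fin n) ℝ) := Matrix.linftyOpNormedAlgebra
  have h : Summable fun k : ℕ => ((k.factorial : ℝ)⁻¹) • M ^ k :=
    NormedSpace.expSeries_summable' (𝕂 := ℝ) M
  rw [NormedSpace.exp_eq_tsum ℝ]
  show (∑' k : ℕ, ((k.factorial : ℝ)⁻¹) • M ^ k) i j = _
  exact (congrFun (tsum_apply (x := i) h) j).trans (tsum_apply (Pi.summable.mp h i))

lemma abs_exp_le_exp_mabs (M : Matrix (Fin n) (Fin n) ℂ) (i j : Fin n) :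
    ‖exp M i j‖ ≤ exp (mabs M) i j := by
  rw [exp_entry_C, exp_entry_R]
  have hsR := summable_entry_R (mabs M) i j
  have hterm : ∀ k : ℕ, ‖((k.factorial : ℂ)⁻¹) • (M ^ k) i j‖ ≤
      ((k.factorial : ℝ)⁻¹) • ((mabs M) ^ k) i j := by
    intro k
    rw [norm_smul, smul_eq_mul]
    have h1 : ‖((k.factorial : ℂ)⁻¹)‖ = ((k.factorial : ℝ)⁻¹) := by
      simp
    rw [h1]
    exact mul_le_mul_of_nonneg_left (pow_abs_le M k i j) (by positivity)
  have hsn : Summable fun k : ℕ => ‖((k.factorial : ℂ)⁻¹) • (M ^ k) i j‖ :=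
    Summable.of_nonneg_of_le (fun k => norm_nonneg _) hterm hsR
  exact le_trans (norm_tsum_le_tsum_norm hsn) (Summable.tsum_le_tsum hterm hsn hsR)

lemma exp_mono_entry {P Q : Matrix (Fin n) (Fin n) ℝ} (hP : ∀ i j, 0 ≤ P i j)
    (hPQ : ∀ i j, P i j ≤ Q i j) (i j : Fin n) : exp P i j ≤ exp Q i j := by
  rw [exp_entry_R, exp_entry_R]
  refine Summable.tsum_le_tsum (fun k => ?_) (summable_entry_R P i j) (summable_entry_R Q i j)
  simp only [smul_eq_mul]
  exact mul_le_mul_of_nonneg_left (pow_mono_entry hP hPQ k i j) (by positivity)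

lemma exp_shift_C (M : Matrix (Fin n) (Fin n) ℂ) (c : ℝ) :
    exp (M + (c : ℂ) • 1) = Complex.exp c • exp M := by
  letI : SeminormedRing (Matrix (Fin n) (Fin n) ℂ) := Matrix.linftyOpSemiNormedRing
  letI : NormedRing (Matrix (Fin n) (Fin n) ℂ) := Matrix.linftyOpNormedRing
  letI : NormedAlgebra ℂ (Matrix (Fin n) (Fin n) ℂ) := Matrix.linftyOpNormedAlgebra
  have hcomm : Commute M ((c : ℂ) • (1 : Matrix (Fin n) (Fin n) ℂ)) :=
    (Commute.one_right M).smul_right _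
  rw [Matrix.exp_add_of_commute _ _ hcomm]
  have h1 : ((c : ℂ) • (1 : Matrix (Fin n) (Fin n) ℂ)) =
      algebraMap ℂ (Matrix (Fin n) (Fin n) ℂ) (c : ℂ) :=
    (Algebra.algebraMap_eq_smul_one _).symm
  have hm : exp (algebraMap ℂ (Matrix (Fin n) (Fin n) ℂ) (c : ℂ)) =
      algebraMap ℂ (Matrix (Fin n) (Fin n) ℂ) (exp (c : ℂ)) :=
    (NormedSpace.map_exp (algebraMap ℂ (Matrix (Fin n) (Fin n) ℂ)) (continuous_algebraMap _ _) _).symm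
  rw [h1, hm, ← Complex.exp_eq_exp_ℂ,
    Algebra.algebraMap_eq_smul_one, mul_smul_comm, mul_one]

lemma exp_shift_R (M : Matrix (Fin n) (Fin n) ℝ) (c : ℝ) :
    exp (M + c • 1) = Real.exp c • exp M := by
  letI : SeminormedRing (Matrix (Fin n) (Fin n) ℝ) := Matrix.linftyOpSemiNormedRing
  letI : NormedRing (Matrix (Fin n) (Fin n) ℝ) := Matrix.linftyOpNormedRing
  letI : NormedAlgebra ℝ (Matrix (Fin n) (Fin n) ℝ) := Matrix.linftyOpNormedAlgebra
  have hcomm : Commute M (c • (1 : Matrix (Fin n) (Fin n) ℝ)) :=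
    (Commute.one_right M).smul_right _
  rw [Matrix.exp_add_of_commute _ _ hcomm]
  have h1 : (c • (1 : Matrix (Fin n) (Fin n) ℝ)) =
      algebraMap ℝ (Matrix (Fin n) (Fin n) ℝ) c :=
    (Algebra.algebraMap_eq_smul_one _).symm
  have hm : exp (algebraMap ℝ (Matrix (Fin n) (Fin n) ℝ) c) =
      algebraMap ℝ (Matrix (Fin n) (Fin n) ℝ) (exp c) :=
    (NormedSpace.map_exp (algebraMap ℝ (Matrix (Fin n) (Fin n) ℝ)) (continuous_algebraMap _ _) _).symm
  rw [h1, hm, ← Real.exp_eq_exp_ℝ,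
    Algebra.algebraMap_eq_smul_one, mul_smul_comm, mul_one]

theorem key (M : Matrix (Fin n) (Fin n) ℂ) (S : Matrix (Fin n) (Fin n) ℝ)
    (hdiag : ∀ l, S l l = (M l l).re)
    (hoff : ∀ l m, l ≠ m → S l m = ‖M l m‖) (i j : Fin n) :
    ‖exp M i j‖ ≤ exp S i j := by
  set B : ℝ := ∑ l, (M l l).im ^ 2 with hB
  set c₀ : ℝ := 1 + 2 * ∑ l, ‖M l l‖ with hc₀
  have hc₀1 : (1 : ℝ) ≤ c₀ := by
    have : (0:ℝ) ≤ ∑ l, ‖M l l‖ :=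
      Finset.sum_nonneg fun l _ => norm_nonneg _
    linarith
  have hbound : ∀ c : ℝ, c₀ ≤ c →
      ‖exp M i j‖ ≤ Real.exp (B / c) * exp S i j := by
    intro c hc
    have hc1 : (1:ℝ) ≤ c := hc₀1.trans hc
    have hcpos : (0:ℝ) < c := by linarith
    set ε : ℝ := B / c with hε
    have hBnn : 0 ≤ B := Finset.sum_nonneg fun l _ => sq_nonneg _
    have hεnn : 0 ≤ ε := div_nonneg hBnn hcpos.le
    -- entrywise comparison
    have hcomp : ∀ l m, mabs (M + (c : ℂ) • 1) l m ≤ (S + (c + ε) • 1) l m := by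
      intro l m
      by_cases hlm : l = m
      · subst hlm
        simp only [mabs, Matrix.add_apply, Matrix.smul_apply, Matrix.one_apply_eq,
          smul_eq_mul, mul_one, hdiag l]
        set z := M l l
        have hzre : |z.re| ≤ (c - 1) / 2 := by
          have h1 : |z.re| ≤ ‖z‖ := Complex.abs_re_le_norm z
          have h2 : ‖z‖ ≤ ∑ l', ‖M l' l'‖ :=
            Finset.single_le_sum (f := fun l' => ‖M l' l'‖)
              (fun l' _ => norm_nonneg _) (Finset.mem_univ l)
          have h3 : 2 * ∑ l', ‖M l' l'‖ ≤ c - 1 := by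
            rw [hc₀] at hc; linarith
          have h4 : (0:ℝ) ≤ ‖z‖ := norm_nonneg _
          linarith
        have hrc : c / 2 ≤ z.re + c := by
          have := abs_le.mp hzre
          linarith [this.1]
        have him : z.im ^ 2 ≤ B :=
          Finset.single_le_sum (f := fun l' => (M l' l').im ^ 2)
            (fun l' _ => sq_nonneg _) (Finset.mem_univ l)
        have hεr : z.im ^ 2 ≤ 2 * ε * (z.re + c) := by
          have h5 : 2 * ε * (z.re + c) ≥ 2 * ε * (c / 2) :=
            mul_le_mul_of_nonneg_left hrc (by linarith)
          have h6 : 2 * ε * (c / 2) = B := by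
            rw [hε]; field_simp
          linarith
        have hsq : (‖z + c‖) ^ 2 ≤ (z.re + c + ε) ^ 2 := by
          have h7 : (‖z + (c:ℂ)‖) ^ 2 = (z.re + c) ^ 2 + z.im ^ 2 := by
            rw [Complex.sq_norm, Complex.normSq_apply]
            simp only [Complex.add_re, Complex.ofReal_re, Complex.add_im,
              Complex.ofReal_im, add_zero]
            ring
          rw [h7]; nlinarith
        have habs : 0 ≤ ‖z + (c:ℂ)‖ := norm_nonneg _
        have hrhs : 0 ≤ z.re + c + ε := by linarith
        nlinarith
      · simp only [mabs, Matrix.add_apply, Matrix.smul_apply,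
          Matrix.one_apply_ne hlm, smul_eq_mul, mul_zero, add_zero, smul_zero,
          hoff l m hlm, le_refl]
    have hPnn : ∀ l m, 0 ≤ mabs (M + (c : ℂ) • 1) l m :=
      fun l m => norm_nonneg _
    have h1 : Real.exp c * ‖exp M i j‖ =
        ‖exp (M + (c : ℂ) • 1) i j‖ := by
      rw [exp_shift_C]
      simp only [Matrix.smul_apply, smul_eq_mul, norm_mul, Complex.norm_exp]
      simp
    have h2 := abs_exp_le_exp_mabs (M + (c : ℂ) • 1) i j
    have h3 := exp_mono_entry hPnn hcomp i j
    have h4 : exp (S + (c + ε) • 1) i j = Real.exp (c + ε) * exp S i j := by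
      rw [exp_shift_R]; simp
    have h5 : Real.exp c * ‖exp M i j‖ ≤
        Real.exp (c + ε) * exp S i j := by
      rw [h1, ← h4]; exact h2.trans h3
    have h6 : Real.exp (c + ε) = Real.exp c * Real.exp ε := Real.exp_add c ε
    have h7 : (0:ℝ) < Real.exp c := Real.exp_pos c
    rw [h6, mul_assoc] at h5
    exact le_of_mul_le_mul_left h5 h7
  -- take the limit c → ∞
  have hlim : Filter.Tendsto (fun c : ℝ => Real.exp (B / c) * exp S i j)
      Filter.atTop (nhds (exp S i j)) := by
    have h0 : Filter.Tendsto (fun c : ℝ => B / c) Filter.atTop (nhds 0) :=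
      Filter.Tendsto.div_atTop tendsto_const_nhds Filter.tendsto_id
    have h1 := (Real.continuous_exp.tendsto 0).comp h0
    rw [Real.exp_zero] at h1
    have h2 := h1.mul_const (exp S i j)
    rwa [one_mul] at h2
  exact ge_of_tendsto hlim (Filter.eventually_atTop.mpr ⟨c₀, hbound⟩)

end MSGD

/-- entrywise domination of the matrix semigroup `(e^{-tA})` by
the modulus semigroup `(e^{-tA^♯})`, where `A^♯_{ii} = Re A_{ii}` and
`A^♯_{ij} = -|A_{ij}|` for `i ≠ j`. -/
theorem matrix_modulus_semigroup_domination
    (n : ℕ) (A : Matrix (Fin n) (Fin n) ℂ) :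
    let Asharp : Matrix (Fin n) (Fin n) ℝ := fun i j =>
      if i = j then (A i j).re else -‖A i j‖
    ∀ t : ℝ, 0 ≤ t → ∀ i j : Fin n,
      ‖NormedSpace.exp (-(t • A)) i j‖ ≤
        NormedSpace.exp (-(t • Asharp)) i j := by
  intro Asharp t ht i j
  refine MSGD.key (-(t • A)) (-(t • Asharp)) ?_ ?_ i j
  · intro l
    simp only [Matrix.neg_apply, Matrix.smul_apply, smul_eq_mul]
    simp [Asharp, Matrix.neg_apply, Matrix.smul_apply, Pi.smul_apply, Complex.real_smul]
  · intro l m hlm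
    simp only [Matrix.neg_apply, Matrix.smul_apply, smul_eq_mul]
    simp [Asharp, Matrix.neg_apply, Matrix.smul_apply, Pi.smul_apply, hlm, Complex.real_smul,
      norm_mul, Complex.norm_real, abs_of_nonneg ht]
end

section
/- Let A be a complex n×n matrix and A^♯ its modulus generator (A^♯_{ii} = Re A_{ii}, A^♯_{ij} = -|A_{ij}| for i≠j). If all eigenvalues of A^♯ have positive real part (equivalently s(-A^♯) < 0), then A is invertible and |A^{-1}| ≤ (A^♯)^{-1} entrywise, where |A^{-1}| denotes the entrywise absolute value. -/
open scoped Matrix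

namespace MatrixMInvAux

attribute [local instance] Matrix.linftyOpNormedRing Matrix.linftyOpNormedAlgebra

variable {n : ℕ}

lemma entry_nnnorm_le (Y : Matrix (Fin n) (Fin n) ℝ) (i j : Fin n) : ‖Y i j‖₊ ≤ ‖Y‖₊ := by
  rw [Matrix.linfty_opNNNorm_def]
  calc ‖Y i j‖₊ ≤ ∑ k : Fin n, ‖Y i k‖₊ :=
        Finset.single_le_sum (f := fun k => ‖Y i k‖₊) (fun k _ => zero_le) (Finset.mem_univ j)
  _ ≤ _ := Finset.le_sup (f := fun i => ∑ k : Fin n, ‖Y i k‖₊) (Finset.mem_univ i)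

lemma continuous_entry (i j : Fin n) :
    Continuous fun X : Matrix (Fin n) (Fin n) ℝ => X i j := by
  have hl : LipschitzWith 1 (fun X : Matrix (Fin n) (Fin n) ℝ => X i j) := by
    apply LipschitzWith.of_dist_le_mul
    intro X Y
    rw [dist_eq_norm, dist_eq_norm, NNReal.coe_one, one_mul]
    have h1 : X i j - Y i j = (X - Y) i j := by simp
    rw [h1]
    exact_mod_cast entry_nnnorm_le (X - Y) i j
  exact hl.continuous

lemma pow_entry_nonneg (X : Matrix (Fin n) (Fin n) ℝ) (hX : ∀ i j, 0 ≤ X i j) (k : ℕ) :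
    ∀ i j, 0 ≤ (X ^ k) i j := by
  induction k with
  | zero =>
    intro i j
    rw [pow_zero]
    by_cases h : i = j <;> simp [Matrix.one_apply, h]
  | succ k ih =>
    intro i j
    rw [pow_succ, Matrix.mul_apply]
    exact Finset.sum_nonneg fun l _ => mul_nonneg (ih i l) (hX l j)

lemma norm_map_ofReal (Y : Matrix (Fin n) (Fin n) ℝ) :
    ‖Y.map (Complex.ofReal : ℝ → ℂ)‖ = ‖Y‖ := by
  have h : ‖Y.map (Complex.ofReal : ℝ → ℂ)‖₊ = ‖Y‖₊ := by
    simp only [Matrix.linfty_opNNNorm_def, Matrix.map_apply, Complex.nnnorm_real]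
  rw [← coe_nnnorm, ← coe_nnnorm, h]

/-- The key M-matrix lemma: a real Z-matrix whose complexification has spectrum in the open
right half plane is invertible with entrywise nonnegative inverse. -/
theorem mmatrix_key (M : Matrix (Fin n) (Fin n) ℝ)
    (hZ : ∀ i j, i ≠ j → M i j ≤ 0)
    (hspec : ∀ z ∈ spectrum ℂ (M.map (Complex.ofReal : ℝ → ℂ)), 0 < z.re) :
    IsUnit M ∧ ∀ i j, 0 ≤ M⁻¹ i j := by
  rcases Nat.eq_zero_or_pos n with hn | hn
  · subst hn
    exact ⟨(Matrix.isUnit_iff_isUnit_det M).mpr (by simp [Matrix.det_fin_zero]),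
      fun i _ => i.elim0⟩
  haveI : Nonempty (Fin n) := Fin.pos_iff_nonempty.mp hn
  set Mc : Matrix (Fin n) (Fin n) ℂ := M.map (Complex.ofReal : ℝ → ℂ) with hMc
  have hScomp : IsCompact (spectrum ℂ Mc) := spectrum.isCompact Mc
  -- a positive lower bound for the real parts
  obtain ⟨δ, hδpos, hδ⟩ : ∃ δ : ℝ, 0 < δ ∧ ∀ μ ∈ spectrum ℂ Mc, δ ≤ μ.re := by
    rcases (spectrum ℂ Mc).eq_empty_or_nonempty with h | h
    · exact ⟨1, one_pos, by simp [h]⟩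
    · obtain ⟨μ₀, hμ₀, hmin⟩ := hScomp.exists_isMinOn h Complex.continuous_re.continuousOn
      exact ⟨μ₀.re, hspec _ hμ₀, fun μ hμ => hmin hμ⟩
  -- an upper bound for the moduli
  obtain ⟨R₀, hR₀⟩ := hScomp.isBounded.subset_closedBall 0
  obtain ⟨R, hR0, hR⟩ : ∃ R : ℝ, 0 ≤ R ∧ ∀ μ ∈ spectrum ℂ Mc, ‖μ‖ ≤ R := by
    refine ⟨max R₀ 0, le_max_right _ _, fun μ hμ => ?_⟩
    have h := hR₀ hμ
    rw [Metric.mem_closedBall, dist_zero_right] at h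
    exact le_trans (le_of_eq rfl) (le_max_of_le_left h)
  -- the shift
  obtain ⟨c, hc0, hcR, hcd⟩ :
      ∃ c : ℝ, 0 < c ∧ R ^ 2 + 2 * δ ≤ 2 * δ * c ∧ ∀ i, M i i < c := by
    refine ⟨max ((R ^ 2 + 2 * δ) / (2 * δ)) (∑ k, |M k k|) + 1, ?_, ?_, ?_⟩
    · have h0 : (0:ℝ) ≤ (R ^ 2 + 2 * δ) / (2 * δ) := by positivity
      have h := le_max_left ((R ^ 2 + 2 * δ) / (2 * δ)) (∑ k, |M k k|)
      linarith
    · have h := le_max_left ((R ^ 2 + 2 * δ) / (2 * δ)) (∑ k, |M k k|)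
      have h2 : (R ^ 2 + 2 * δ) / (2 * δ)
          ≤ max ((R ^ 2 + 2 * δ) / (2 * δ)) (∑ k, |M k k|) + 1 := by linarith
      rw [div_le_iff₀ (by positivity : (0:ℝ) < 2 * δ)] at h2
      linarith
    · intro i
      have h1 : M i i ≤ ∑ k, |M k k| :=
        le_trans (le_abs_self _)
          (Finset.single_le_sum (f := fun k => |M k k|) (fun k _ => abs_nonneg _)
            (Finset.mem_univ i))
      linarith [le_max_right ((R ^ 2 + 2 * δ) / (2 * δ)) (∑ k, |M k k|)]
  -- x = I - M/c  is entrywise nonnegative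
  set x : Matrix (Fin n) (Fin n) ℝ := c⁻¹ • (c • (1 : Matrix (Fin n) (Fin n) ℝ) - M) with hxdef
  have hxnn : ∀ i j, 0 ≤ x i j := by
    intro i j
    have hc0' : (0:ℝ) ≤ c⁻¹ := by positivity
    by_cases h : i = j
    · subst h
      have h2 : x i i = c⁻¹ * (c - M i i) := by
        simp [hxdef, Matrix.sub_apply, Matrix.smul_apply, Matrix.one_apply]
      rw [h2]
      exact mul_nonneg hc0' (by linarith [hcd i])
    · have h2 : x i j = c⁻¹ * (0 - M i j) := by
        simp [hxdef, Matrix.sub_apply, Matrix.smul_apply, Matrix.one_apply, h]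
      rw [h2]
      exact mul_nonneg hc0' (by linarith [hZ i j h])
  have hMx : M = c • ((1 : Matrix (Fin n) (Fin n) ℝ) - x) := by
    have h1 : c • x = c • (1 : Matrix (Fin n) (Fin n) ℝ) - M := by
      rw [hxdef, smul_smul, mul_inv_cancel₀ hc0.ne', one_smul]
    rw [smul_sub, h1]
    abel
  -- spectrum of the complexification of x
  set xc : Matrix (Fin n) (Fin n) ℂ := x.map (Complex.ofReal : ℝ → ℂ) with hxcdef
  have hxc : xc = ((c:ℂ)⁻¹ : ℂ) • (algebraMap ℂ (Matrix (Fin n) (Fin n) ℂ) (c:ℂ) - Mc) := by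
    ext i j
    rw [Algebra.algebraMap_eq_smul_one]
    by_cases h : i = j <;>
      simp [hxcdef, hxdef, hMc, Matrix.map_apply, Matrix.sub_apply, Matrix.smul_apply,
        Matrix.one_apply, h] <;> push_cast <;> ring
  obtain ⟨rr, hrr1, hzb⟩ : ∃ rr : ℝ, rr < 1 ∧ ∀ z ∈ spectrum ℂ xc, ‖z‖ ≤ rr := by
    refine ⟨Real.sqrt (c ^ 2 - 2 * δ) / c, ?_, ?_⟩
    · rw [div_lt_one hc0, Real.sqrt_lt' hc0]
      linarith
    · intro z hz
      rw [hxc] at hz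
      have hcu : ((c:ℂ)⁻¹ : ℂ) ≠ 0 := by
        simp only [ne_eq, inv_eq_zero, Complex.ofReal_eq_zero]
        exact hc0.ne'
      rw [show ((c:ℂ)⁻¹ : ℂ) • (algebraMap ℂ (Matrix (Fin n) (Fin n) ℂ) (c:ℂ) - Mc)
            = (Units.mk0 _ hcu : ℂˣ) • (algebraMap ℂ (Matrix (Fin n) (Fin n) ℂ) (c:ℂ) - Mc)
          from rfl,
        spectrum.unit_smul_eq_smul, ← spectrum.singleton_sub_eq] at hz
      obtain ⟨w, hw, hzeq⟩ := hz
      obtain ⟨a, ha, b, hb, rfl⟩ := Set.mem_sub.mp hw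
      rw [Set.mem_singleton_iff] at ha
      subst ha
      have hbre := hδ b hb
      have hbabs := hR b hb
      have key : ‖(c:ℂ) - b‖ ≤ Real.sqrt (c ^ 2 - 2 * δ) := by
        have habs2 : (‖(c:ℂ) - b‖) ^ 2 = (c - b.re) ^ 2 + b.im ^ 2 := by
          rw [Complex.sq_norm, Complex.normSq_apply]
          simp only [Complex.sub_re, Complex.sub_im, Complex.ofReal_re, Complex.ofReal_im]
          ring
        have hb2 : b.re ^ 2 + b.im ^ 2 ≤ R ^ 2 := by
          have h := Complex.sq_norm b
          rw [Complex.normSq_apply] at h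
          nlinarith [norm_nonneg b]
        have h1 : (‖(c:ℂ) - b‖) ^ 2 ≤ c ^ 2 - 2 * δ := by
          rw [habs2]
          nlinarith [hb2, hcR, hδpos, hc0, mul_nonneg hc0.le (sub_nonneg.mpr hbre)]
        have h2 : ‖(c:ℂ) - b‖ = Real.sqrt ((‖(c:ℂ) - b‖) ^ 2) := by
          rw [Real.sqrt_sq (norm_nonneg _)]
        rw [h2]
        exact Real.sqrt_le_sqrt h1
      rw [← hzeq]
      simp only [Units.val_mk0, smul_eq_mul]
      have hnc : ‖((c:ℝ) : ℂ)‖ = c := by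
        rw [Complex.norm_real, Real.norm_eq_abs, abs_of_pos hc0]
      rw [norm_mul, norm_inv, hnc, inv_mul_eq_div]
      gcongr
  -- spectral radius < 1, Gelfand, get a power with small norm
  have hsr : spectralRadius ℂ xc < 1 := by
    have h := spectrum.spectralRadius_lt_of_forall_lt (a := xc) (r := 1)
      (fun z hz => by exact_mod_cast lt_of_le_of_lt (hzb z hz) hrr1)
    simpa using h
  obtain ⟨m, hm1, hmlt⟩ : ∃ m : ℕ, 1 ≤ m ∧ (‖xc ^ m‖₊ : ENNReal) ^ (1 / m : ℝ) < 1 := by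
    have hev := (spectrum.pow_nnnorm_pow_one_div_tendsto_nhds_spectralRadius
      xc).eventually_lt_const hsr
    obtain ⟨m, hm⟩ := (hev.and (Filter.eventually_ge_atTop 1)).exists
    exact ⟨m, hm.2, hm.1⟩
  have hxcm : ‖xc ^ m‖₊ < 1 := by
    by_contra h
    push_neg at h
    have h1 : (1 : ENNReal) ≤ (‖xc ^ m‖₊ : ENNReal) := by exact_mod_cast h
    have h3 : ((1 : ENNReal)) ^ (1 / m : ℝ) ≤ (‖xc ^ m‖₊ : ENNReal) ^ (1 / m : ℝ) :=
      ENNReal.rpow_le_rpow h1 (by positivity)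
    rw [ENNReal.one_rpow] at h3
    exact absurd (lt_of_le_of_lt h3 hmlt) (lt_irrefl _)
  -- transfer to the real matrix
  have hxm : ‖x ^ m‖ < 1 := by
    have hmap : (x ^ m).map (Complex.ofReal : ℝ → ℂ) = xc ^ m := by
      have h := map_pow (Complex.ofRealHom.mapMatrix :
        Matrix (Fin n) (Fin n) ℝ →+* Matrix (Fin n) (Fin n) ℂ) x m
      exact h
    have h2 : ‖x ^ m‖ = ‖xc ^ m‖ := by rw [← hmap, norm_map_ofReal]
    rw [h2, ← coe_nnnorm]
    exact_mod_cast hxcm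
  -- Neumann series
  set y : Matrix (Fin n) (Fin n) ℝ := x ^ m with hydef
  have hynn : ∀ i j, 0 ≤ y i j := pow_entry_nonneg x hxnn m
  have hsum : Summable fun k : ℕ => y ^ k := summable_geometric_of_norm_lt_one hxm
  set t : Matrix (Fin n) (Fin n) ℝ := ∑' k : ℕ, y ^ k with htdef
  have htinv : (1 - y) * t = 1 := mul_neg_geom_series y hxm
  have htnn : ∀ i j, 0 ≤ t i j := by
    intro i j
    have h1 : Filter.Tendsto (fun N => ∑ k ∈ Finset.range N, y ^ k) Filter.atTop (nhds t) :=
      hsum.hasSum.tendsto_sum_nat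
    have h2 : Filter.Tendsto (fun N => (∑ k ∈ Finset.range N, y ^ k) i j) Filter.atTop
        (nhds (t i j)) := ((continuous_entry i j).tendsto t).comp h1
    refine ge_of_tendsto' h2 fun N => ?_
    rw [Matrix.sum_apply]
    exact Finset.sum_nonneg fun k _ => pow_entry_nonneg y hynn k i j
  set g : Matrix (Fin n) (Fin n) ℝ := ∑ k ∈ Finset.range m, x ^ k with hgdef
  have hgnn : ∀ i j, 0 ≤ g i j := by
    intro i j
    rw [hgdef, Matrix.sum_apply]
    exact Finset.sum_nonneg fun k _ => pow_entry_nonneg x hxnn k i j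
  have hgeom : (1 - x) * g = 1 - y := by
    have hcomm : Commute x g := by
      rw [hgdef]
      exact Commute.sum_right _ _ _ fun k _ => (Commute.pow_self x k).symm
    have h2 : (1 - x) * g = g * (1 - x) := by
      rw [mul_sub, sub_mul, one_mul, mul_one, hcomm.eq]
    rw [h2, hgdef]
    have h3 := geom_sum_mul x m
    have h4 : (∑ k ∈ Finset.range m, x ^ k) * (1 - x)
        = -((∑ k ∈ Finset.range m, x ^ k) * (x - 1)) := by
      rw [← mul_neg]
      congr 1
      abel
    rw [h4, h3, hydef]
    abel
  have hinv1 : (1 - x) * (g * t) = 1 := by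
    rw [← mul_assoc, hgeom, htinv]
  have hu : IsUnit ((1 : Matrix (Fin n) (Fin n) ℝ) - x) :=
    ⟨⟨1 - x, g * t, hinv1, mul_eq_one_comm.mp hinv1⟩, rfl⟩
  have hinv_eq : ((1 : Matrix (Fin n) (Fin n) ℝ) - x)⁻¹ = g * t :=
    Matrix.inv_eq_right_inv hinv1
  have hdet1x : IsUnit ((1 : Matrix (Fin n) (Fin n) ℝ) - x).det :=
    (Matrix.isUnit_iff_isUnit_det _).mp hu
  have hright : M * (c⁻¹ • (g * t)) = 1 := by
    rw [hMx, Matrix.smul_mul, Matrix.mul_smul, smul_smul, mul_inv_cancel₀ hc0.ne',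
      one_smul, hinv1]
  have hMinv : M⁻¹ = c⁻¹ • (g * t) := Matrix.inv_eq_right_inv hright
  constructor
  · exact ⟨⟨M, c⁻¹ • (g * t), hright, mul_eq_one_comm.mp hright⟩, rfl⟩
  · intro i j
    rw [hMinv]
    have h1 : (c⁻¹ • (g * t)) i j = c⁻¹ * (g * t) i j := rfl
    rw [h1, Matrix.mul_apply]
    exact mul_nonneg (by positivity)
      (Finset.sum_nonneg fun k _ => mul_nonneg (hgnn i k) (htnn k j))

/-- comparison: if `M⁻¹ ≥ 0` and `M w ≤ u` entrywise then `w ≤ M⁻¹ u` entrywise. -/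
lemma compare (M : Matrix (Fin n) (Fin n) ℝ) (hM : IsUnit M) (hMinv : ∀ i j, 0 ≤ M⁻¹ i j)
    (w u : Fin n → ℝ) (h : ∀ i, M.mulVec w i ≤ u i) : ∀ i, w i ≤ M⁻¹.mulVec u i := by
  intro i
  have hdet : IsUnit M.det := (Matrix.isUnit_iff_isUnit_det M).mp hM
  have hw : M⁻¹.mulVec (M.mulVec w) = w := by
    rw [Matrix.mulVec_mulVec, Matrix.nonsing_inv_mul M hdet, Matrix.one_mulVec]
  have e : ∀ v : Fin n → ℝ, M⁻¹.mulVec v i = ∑ k, M⁻¹ i k * v k := fun v => rfl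
  calc w i = M⁻¹.mulVec (M.mulVec w) i := by rw [hw]
    _ ≤ M⁻¹.mulVec u i := by
        rw [e, e]
        exact Finset.sum_le_sum fun k _ => mul_le_mul_of_nonneg_left (h k) (hMinv i k)

end MatrixMInvAux

/-- if all eigenvalues of the modulus generator `A^♯` have
positive real part, then `A` is invertible and `|A⁻¹| ≤ (A^♯)⁻¹` entrywise. -/
theorem matrix_inverse_dominated_by_modulus_inverse
    (n : ℕ) (A : Matrix (Fin n) (Fin n) ℂ) :
    let Asharp : Matrix (Fin n) (Fin n) ℝ := fun i j =>
      if i = j then (A i j).re else -‖A i j‖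
    (∀ z ∈ spectrum ℂ (Asharp.map (Complex.ofReal : ℝ → ℂ)), 0 < z.re) →
      IsUnit A ∧ ∀ i j : Fin n, ‖A⁻¹ i j‖ ≤ Asharp⁻¹ i j := by
  intro Asharp hspec
  have hZ : ∀ i j, i ≠ j → Asharp i j ≤ 0 := by
    intro i j h
    simp only [Asharp, if_neg h]
    exact neg_nonpos.mpr (norm_nonneg _)
  obtain ⟨hMunit, hMinv⟩ := MatrixMInvAux.mmatrix_key Asharp hZ hspec
  -- the domination inequality for mulVec
  have hdom : ∀ (v : Fin n → ℂ) (i : Fin n),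
      Asharp.mulVec (fun k => ‖v k‖) i ≤ ‖A.mulVec v i‖ := by
    intro v i
    have e1 : A.mulVec v i = A i i * v i + ∑ k ∈ Finset.univ.erase i, A i k * v k := by
      have e0 : A.mulVec v i = ∑ k, A i k * v k := rfl
      rw [e0]
      exact (Finset.add_sum_erase _ _ (Finset.mem_univ i)).symm
    have e3 : Asharp.mulVec (fun k => ‖v k‖) i
        = (A i i).re * ‖v i‖
          - ∑ k ∈ Finset.univ.erase i, ‖A i k‖ * ‖v k‖ := by
      have e0 : Asharp.mulVec (fun k => ‖v k‖) i
          = ∑ k, Asharp i k * ‖v k‖ := rfl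
      rw [e0, ← Finset.add_sum_erase _ _ (Finset.mem_univ i)]
      have h1 : Asharp i i = (A i i).re := by simp [Asharp]
      have h2 : ∀ k ∈ Finset.univ.erase i,
          Asharp i k * ‖v k‖ = -(‖A i k‖ * ‖v k‖) := by
        intro k hk
        have hne : i ≠ k := (Finset.ne_of_mem_erase hk).symm
        simp [Asharp, hne, neg_mul]
      rw [Finset.sum_congr rfl h2, Finset.sum_neg_distrib, h1]
      ring
    have e2 : (A i i).re * ‖v i‖
        ≤ ‖A.mulVec v i‖
          + ∑ k ∈ Finset.univ.erase i, ‖A i k‖ * ‖v k‖ := by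
      calc (A i i).re * ‖v i‖
          ≤ ‖A i i‖ * ‖v i‖ :=
            mul_le_mul_of_nonneg_right (Complex.re_le_norm _) (norm_nonneg _)
        _ = ‖A i i * v i‖ := (norm_mul _ _).symm
        _ = ‖A.mulVec v i + -(∑ k ∈ Finset.univ.erase i, A i k * v k)‖ := by
            have e4 : A i i * v i
                = A.mulVec v i + -(∑ k ∈ Finset.univ.erase i, A i k * v k) := by
              rw [e1]; ring
            rw [e4]
        _ ≤ ‖A.mulVec v i‖
            + ‖-(∑ k ∈ Finset.univ.erase i, A i k * v k)‖ :=
            norm_add_le _ _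
        _ = ‖A.mulVec v i‖
            + ‖∑ k ∈ Finset.univ.erase i, A i k * v k‖ := by
            rw [norm_neg]
        _ ≤ ‖A.mulVec v i‖
            + ∑ k ∈ Finset.univ.erase i, ‖A i k * v k‖ :=
            add_le_add_right (norm_sum_le _ _) _
        _ = ‖A.mulVec v i‖
            + ∑ k ∈ Finset.univ.erase i, ‖A i k‖ * ‖v k‖ := by
            simp [map_mul]
    rw [e3]
    linarith
  -- invertibility of A
  have hA : IsUnit A := by
    rw [Matrix.isUnit_iff_isUnit_det, isUnit_iff_ne_zero]
    intro hdet
    obtain ⟨v, hv, hAv⟩ := Matrix.exists_mulVec_eq_zero_iff.mpr hdet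
    have hle : ∀ i, Asharp.mulVec (fun k => ‖v k‖) i ≤ (0 : Fin n → ℝ) i := by
      intro i
      have h := hdom v i
      rw [hAv] at h
      simpa using h
    have hcmp := MatrixMInvAux.compare Asharp hMunit hMinv _ 0 hle
    have hv0 : v = 0 := by
      funext i
      have h1 := hcmp i
      rw [Matrix.mulVec_zero] at h1
      have h2 : ‖v i‖ ≤ 0 := by simpa using h1
      exact norm_eq_zero.mp (le_antisymm h2 (norm_nonneg _))
    exact hv hv0
  refine ⟨hA, fun i j => ?_⟩
  have hdetA : IsUnit A.det := (Matrix.isUnit_iff_isUnit_det A).mp hA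
  set xv : Fin n → ℂ := fun k => A⁻¹ k j with hxv
  have hAx : A.mulVec xv = fun k => if k = j then 1 else 0 := by
    funext k
    have h1 : A.mulVec xv k = (A * A⁻¹) k j := by
      rw [Matrix.mul_apply]; rfl
    rw [h1, Matrix.mul_nonsing_inv A hdetA, Matrix.one_apply]
  have hle : ∀ k, Asharp.mulVec (fun l => ‖xv l‖) k
      ≤ (fun l => if l = j then (1:ℝ) else 0) k := by
    intro k
    have h := hdom xv k
    rw [hAx] at h
    refine le_trans h ?_
    by_cases hkj : k = j <;> simp [hkj]
  have hfin := MatrixMInvAux.compare Asharp hMunit hMinv _ _ hle i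
  refine le_trans hfin ?_
  have e : Asharp⁻¹.mulVec (fun l => if l = j then (1:ℝ) else 0) i
      = ∑ k, Asharp⁻¹ i k * (if k = j then (1:ℝ) else 0) := rfl
  rw [e]
  simp only [mul_ite, mul_one, mul_zero]
  rw [Finset.sum_ite_eq' Finset.univ j (fun k => Asharp⁻¹ i k)]
  simp
end
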